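/- Let Γ be a finite set of nonnegative integers containing 0, with E := #(Γ ∩ 2ℤ) even elements and O := #(Γ ∩ (2ℤ+1)) odd elements, and assume O ≥ E. Then there exist real numbers α_1, ..., α_E such that the function f(x) = 1 + Σ_{k=1}^{E} α_k cos(2πkx) satisfies f^{(γ)}(n) = 0 for every γ ∈ Γ and every integer n. -/

import Mathlib

/-!
At an integer `n` every cosine `cos (2πk x)` contributes to `f^{(γ)}(n)` the factor
`(2πk)^γ cos (γπ/2)`, so odd derivatives vanish on `ℤ` and an even `γ ∈ Γ` imposes
`∑ₖ αₖ (2πk)^γ = -[γ = 0]`. This square system has the generalized Vandermonde matrix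
`((2πk)^γ)`, which is invertible: by Descartes' rule of signs a nonzero real polynomial with
`s` monomials has fewer than `s` positive roots.
-/

open Real Finset Polynomial

namespace Polynomial

theorem signVariations_lt_card_support {R : Type*} [Semiring R] [LinearOrder R] {P : R[X]}
    (hP : P ≠ 0) : P.signVariations < #P.support := by
  induction h : #P.support generalizing P with
  | zero => simp_all
  | succ n ih =>
    rcases Nat.eq_zero_or_pos n with rfl | hn
    · obtain ⟨k, c, -, rfl⟩ := card_support_eq_one.mp h
      rw [C_mul_X_pow_eq_monomial, signVariations_monomial]
      exact Nat.one_pos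
    · have hlead : P.eraseLead ≠ 0 := eraseLead_ne_zero (by omega)
      have := ih hlead (card_support_eraseLead' h)
      have := signVariations_le_eraseLead_succ P
      omega

theorem card_lt_card_support_of_pos_isRoot {R : Type*} [CommRing R] [LinearOrder R]
    [IsStrictOrderedRing R] {P : R[X]} (hP : P ≠ 0) {S : Finset R} (hS : ∀ x ∈ S, 0 < x)
    (hroot : ∀ x ∈ S, P.IsRoot x) : #S < #P.support := by
  have hsub : S.val ≤ P.roots :=
    (Multiset.le_iff_subset S.nodup).mpr fun x hx => (mem_roots hP).mpr (hroot x hx)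
  calc #S = S.val.countP (0 < ·) := (Multiset.countP_eq_card.mpr hS).symm
    _ ≤ P.roots.countP (0 < ·) := Multiset.countP_le_of_le _ hsub
    _ ≤ P.signVariations := roots_countP_pos_le_signVariations P
    _ < #P.support := signVariations_lt_card_support hP

end Polynomial

namespace Matrix

variable {ι : Type*} [Fintype ι]

def genVandermonde (d : ι → ℕ) (y : ι → ℝ) : Matrix ι ι ℝ := of fun i j => y j ^ d i

theorem isUnit_genVandermonde [DecidableEq ι] {d : ι → ℕ} (hd : Function.Injective d) {y : ι → ℝ}
    (hy : Function.Injective y) (hy0 : ∀ j, 0 < y j) : IsUnit (genVandermonde d y) := by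
  rw [← linearIndependent_rows_iff_isUnit, Fintype.linearIndependent_iff]
  intro g hg
  set P : ℝ[X] := ∑ i, monomial (d i) (g i)
  have hcoeff : ∀ i, P.coeff (d i) = g i := fun i => by
    simp [P, coeff_monomial, hd.eq_iff]
  have hroot : ∀ x ∈ univ.image y, P.IsRoot x := by
    simp only [mem_image, mem_univ, true_and, forall_exists_index, forall_apply_eq_imp_iff]
    intro j
    simpa [P, eval_finsetSum, genVandermonde, mul_comm] using congrFun hg j
  have hP : P = 0 := by
    by_contra hP
    have hsupp : P.support ⊆ univ.image d := by
      intro m hm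
      by_contra hm'
      simp only [mem_image, mem_univ, true_and, not_exists] at hm'
      exact mem_support_iff.mp hm (by simp [P, coeff_monomial, hm'])
    have := card_lt_card_support_of_pos_isRoot hP (by simpa using hy0) hroot
    rw [card_image_of_injective _ hy] at this
    have := (card_le_card hsupp).trans card_image_le
    omega
  intro i
  rw [← hcoeff i, hP, coeff_zero]

end Matrix

theorem iteratedDeriv_cos_mul (a : ℝ) (n : ℕ) :
    iteratedDeriv n (fun x => cos (a * x)) = fun x => a ^ n * cos (a * x + n * (π / 2)) := by
  induction n with
  | zero => simp
  | succ n ih =>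
    rw [iteratedDeriv_succ, ih]
    funext x
    have h := (((hasDerivAt_id' x).const_mul a).add_const (n * (π / 2))).cos.const_mul (a ^ n)
    rw [h.deriv]
    push_cast
    rw [show a * x + (n + 1) * (π / 2) = a * x + n * (π / 2) + π / 2 by ring, cos_add_pi_div_two]
    ring

theorem iteratedDeriv_one_add_sum_cos {ι : Type*} [Fintype ι] (α a : ι → ℝ) (n : ℕ) (x : ℝ) :
    iteratedDeriv n (fun x => 1 + ∑ k, α k * cos (a k * x)) x =
      (if n = 0 then 1 else 0) + ∑ k, α k * (a k ^ n * cos (a k * x + n * (π / 2))) := by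
  rw [iteratedDeriv_fun_add (by fun_prop) (by fun_prop), iteratedDeriv_const,
    iteratedDeriv_fun_sum fun k _ => by fun_prop]
  congr 1
  refine sum_congr rfl fun k _ => ?_
  rw [iteratedDeriv_const_mul_field, iteratedDeriv_cos_mul]

theorem iteratedDeriv_one_add_sum_cos_of_mem_periods {ι : Type*} [Fintype ι] (α a : ι → ℝ)
    (n : ℕ) {x : ℝ} (hx : ∀ k, ∃ m : ℤ, a k * x = m * (2 * π)) :
    iteratedDeriv n (fun x => 1 + ∑ k, α k * cos (a k * x)) x =
      (if n = 0 then 1 else 0) + cos (n * (π / 2)) * ∑ k, a k ^ n * α k := by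
  rw [iteratedDeriv_one_add_sum_cos, mul_sum]
  congr 1
  refine sum_congr rfl fun k _ => ?_
  obtain ⟨m, hm⟩ := hx k
  rw [hm, add_comm, cos_add_int_mul_two_pi]
  ring

theorem cos_mul_pi_div_two_of_odd {n : ℕ} (hn : Odd n) : cos (n * (π / 2)) = 0 := by
  obtain ⟨m, rfl⟩ := hn
  rw [cos_eq_zero_iff]
  exact ⟨m, by push_cast; ring⟩

theorem cos_add_self_mul_pi_div_two (m : ℕ) : cos ((m + m : ℕ) * (π / 2)) = (-1) ^ m := by
  rw [← cos_nat_mul_pi]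
  congr 1
  push_cast
  ring

theorem stmt_15_general (Γ : Finset ℕ)
    (E : ℕ) (hE : (Γ.filter (fun m => Even m)).card = E) :
    ∃ α : Fin E → ℝ,
      ∀ γ ∈ Γ, ∀ n : ℤ,
        iteratedDeriv γ
          (fun x : ℝ => 1 + ∑ k : Fin E, α k * Real.cos (2 * Real.pi * ((k : ℕ) + 1) * x))
          (n : ℝ) = 0 := by
  set d := (Γ.filter (fun m => Even m)).orderEmbOfFin hE
  set a : Fin E → ℝ := fun k => 2 * π * ((k : ℕ) + 1)
  have ha : Function.Injective a := fun k l h => by simpa [a, pi_ne_zero, Fin.val_inj] using h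
  have ha0 : ∀ k, 0 < a k := fun k => by positivity
  obtain ⟨α, hα⟩ := Matrix.mulVec_surjective_iff_isUnit.mpr
    (Matrix.isUnit_genVandermonde d.injective ha ha0) fun j => if d j = 0 then -1 else 0
  refine ⟨α, fun γ hγ n => ?_⟩
  have hperiod : ∀ k, ∃ m : ℤ, a k * n = m * (2 * π) :=
    fun k => ⟨(k + 1 : ℕ) * n, by push_cast [a]; ring⟩
  rw [iteratedDeriv_one_add_sum_cos_of_mem_periods α a γ hperiod]
  rcases Nat.even_or_odd γ with ⟨m, rfl⟩ | hodd
  · obtain ⟨j, hj⟩ : ∃ j, d j = m + m := by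
      rw [← Set.mem_range, range_orderEmbOfFin]
      simpa using hγ
    have hsys := congrFun hα j
    simp only [Matrix.mulVec, dotProduct, Matrix.genVandermonde, Matrix.of_apply, hj] at hsys
    rw [hsys, cos_add_self_mul_pi_div_two]
    rcases Nat.eq_zero_or_pos m with rfl | hm
    · norm_num
    · simp [hm.ne']
  · have hγ0 : γ ≠ 0 := by rintro rfl; simp at hodd
    simp [cos_mul_pi_div_two_of_odd hodd, hγ0]

theorem stmt_15 (Γ : Finset ℕ) (h0 : 0 ∈ Γ)
    (E O : ℕ) (hE : (Γ.filter (fun m => Even m)).card = E)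
    (hO : (Γ.filter (fun m => Odd m)).card = O) (hOE : E ≤ O) :
    ∃ α : Fin E → ℝ,
      ∀ γ ∈ Γ, ∀ n : ℤ,
        iteratedDeriv γ
          (fun x : ℝ => 1 + ∑ k : Fin E, α k * Real.cos (2 * Real.pi * ((k : ℕ) + 1) * x))
          (n : ℝ) = 0 :=
  stmt_15_general Γ E hE
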